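/- arXiv:0909.4436 — 6 statements merged into one kernel-verified Lean document; each statement's English description precedes it below -/
import Mathlib

section
/- For every n ≥ 1, the (n+2)-nd prime is at most the sum of the (n+1)-st and n-th primes: p_{n+2} ≤ p_{n+1} + p_n. -/
/-- `p n` is the n-th prime, 1-indexed: `p 1 = 2`, `p 2 = 3`, `p 3 = 5`, ... -/
noncomputable def p (n : ℕ) : ℕ := Nat.nth Nat.Prime (n - 1)

/-!
It suffices that `(q, 2q]` contains two primes when `q = p n ≥ 7`: then `p (n + 1)` and
`p (n + 2)` both lie in it, so `p (n + 2) ≤ 2 q < p (n + 1) + p n`. For `q ≥ 512` this comes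
out of Erdős's proof of Bertrand's postulate: the prime factorisation of `centralBinom q` bounds
it by `(2q) ^ (√(2q) + k) * 4 ^ (2q/3)`, where `k` is the number of primes in `(q, 2q]`, and for
`k ≤ 1` this contradicts `4 ^ q < q * centralBinom q`. Smaller `q` are covered by a descending
chain of prime pairs, and `n ≤ 3` by the table of small primes.
-/

namespace Bertrand

open Real

theorem real_main_inequality_succ_sqrt {x : ℝ} (x_large : (512 : ℝ) ≤ x) :
    x * (2 * x) ^ (√(2 * x) + 1) * 4 ^ (2 * x / 3) ≤ 4 ^ x := by
  -- `f` is the logarithm of the ratio of the two sides; being concave with `f 18 ≥ 0 ≥ f 512`,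
  -- it stays `≤ 0` beyond 512.
  let f : ℝ → ℝ := fun x => log x + (√(2 * x) * log (2 * x) + log (2 * x)) - log 4 / 3 * x
  have hconc : ConcaveOn ℝ (Set.Ioi (1 / 2)) f := by
    have h := (strictConcaveOn_sqrt_mul_log_Ioi.concaveOn.add
      (strictConcaveOn_log_Ioi.concaveOn.subset (Set.Ioi_subset_Ioi zero_le_one)
        (convex_Ioi 1))).comp_linearMap ((2 : ℝ) • LinearMap.id)
    refine ((strictConcaveOn_log_Ioi.concaveOn.subset (Set.Ioi_subset_Ioi (by norm_num))
      (convex_Ioi _)).add ?_).sub ((convexOn_id (convex_Ioi _)).smul (by positivity))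
    convert h using 1
    · ext y
      simp only [Set.mem_Ioi, Set.mem_preimage, LinearMap.smul_apply, LinearMap.id_coe, id_eq,
        smul_eq_mul]
      constructor <;> intro <;> linarith
    · ext y
      simp
  have hlog4 : log 4 = 2 * log 2 := by
    rw [show (4 : ℝ) = 2 ^ 2 by norm_num, log_pow]; push_cast; ring
  have hlog2 : 0 < log 2 := log_pos one_lt_two
  have h18 : 0 ≤ f 18 := by
    have : √(2 * 18 : ℝ) = 6 := by
      rw [show (2 * 18 : ℝ) = 6 ^ 2 by norm_num, sqrt_sq (by norm_num)]
    have h36 : log (2 * 18) = log 2 + log 18 := log_mul (by norm_num) (by norm_num)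
    have h2_18 : log 2 ≤ log 18 := log_le_log (by norm_num) (by norm_num)
    simp only [f, this, h36, hlog4]
    linarith
  have h512 : f 512 ≤ 0 := by
    have : √(2 * 512 : ℝ) = 32 := by
      rw [show (2 * 512 : ℝ) = 32 ^ 2 by norm_num, sqrt_sq (by norm_num)]
    have h9 : log 512 = 9 * log 2 := by
      rw [show (512 : ℝ) = 2 ^ 9 by norm_num, log_pow]; push_cast; ring
    have h10 : log (2 * 512) = 10 * log 2 := by
      rw [show (2 * 512 : ℝ) = 2 ^ 10 by norm_num, log_pow]; push_cast; ring
    simp only [f, this, h9, h10, hlog4]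
    linarith
  have hfx : f x ≤ 0 := (hconc.right_le_of_le_left'' (by norm_num) (Set.mem_Ioi.2 (by linarith))
    (by norm_num) x_large (h512.trans h18)).trans h512
  have hx : 0 < x := by linarith
  rw [← log_le_log_iff (by positivity) (by positivity), log_mul (by positivity) (by positivity),
    log_mul (by positivity) (by positivity), log_rpow (by positivity), log_rpow (by positivity),
    log_rpow (by positivity)]
  simp only [f] at hfx
  linarith

end Bertrand

namespace Nat

open Finset

theorem bertrand_main_inequality_succ_sqrt {n : ℕ} (n_large : 512 ≤ n) :
    n * (2 * n) ^ (sqrt (2 * n) + 1) * 4 ^ (2 * n / 3) ≤ 4 ^ n := by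
  rw [← @cast_le ℝ]
  simp only [cast_mul, cast_pow, ← Real.rpow_natCast, cast_ofNat, cast_add, cast_one]
  refine _root_.trans ?_ (Bertrand.real_main_inequality_succ_sqrt (by exact_mod_cast n_large))
  gcongr
  · exact mod_cast (by positivity : 0 < 2 * n)
  · exact_mod_cast Real.nat_sqrt_le_real_sqrt
  · norm_num1
  · exact cast_div_le.trans (by norm_cast)

theorem prod_primesLE_pow_factorization_centralBinom_le {n : ℕ} (hn : 0 < n) (m : ℕ) :
    ∏ p ∈ primesLE m, p ^ (centralBinom n).factorization p ≤
      (2 * n) ^ sqrt (2 * n) * primorial m := by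
  rw [← prod_filter_mul_prod_filter_not (primesLE m) (· ≤ sqrt (2 * n))]
  gcongr
  · calc ∏ p ∈ primesLE m with p ≤ sqrt (2 * n), p ^ (centralBinom n).factorization p
        ≤ (2 * n) ^ #{p ∈ primesLE m | p ≤ sqrt (2 * n)} :=
          prod_le_pow_card _ _ _ fun p _ => pow_factorization_choose_le (by omega)
      _ ≤ (2 * n) ^ sqrt (2 * n) := by
          refine pow_right_mono₀ (by omega)
            ((card_le_card fun p hp => ?_).trans (card_Ioc 0 _).le)
          simp only [mem_filter, mem_primesLE] at hp
          exact mem_Ioc.2 ⟨hp.1.2.pos, hp.2⟩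
  · calc ∏ p ∈ primesLE m with ¬p ≤ sqrt (2 * n), p ^ (centralBinom n).factorization p
        ≤ ∏ p ∈ primesLE m with ¬p ≤ sqrt (2 * n), p := by
          refine prod_le_prod' fun p hp => ?_
          simp only [mem_filter, mem_primesLE, not_le] at hp
          calc p ^ (centralBinom n).factorization p ≤ p ^ 1 :=
                pow_le_pow_right₀ hp.1.2.one_le (factorization_choose_le_one (sqrt_lt'.1 hp.2))
            _ = p := pow_one p
      _ ≤ primorial m :=
          prod_le_prod_of_subset_of_one_le' (filter_subset _ _) fun p hp _ =>
            (prime_of_mem_primesLE hp).one_le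

theorem centralBinom_eq_prod_primesLE_mul_prod_primes_Ioc {n : ℕ} (n_large : 2 < n) :
    centralBinom n = (∏ p ∈ primesLE (2 * n / 3), p ^ (centralBinom n).factorization p) *
      ∏ p ∈ Ioc n (2 * n) with p.Prime, p ^ (centralBinom n).factorization p := by
  have hdisj : Disjoint (primesLE (2 * n / 3)) {p ∈ Ioc n (2 * n) | p.Prime} := by
    refine disjoint_left.2 fun p hp hp' => ?_
    simp only [mem_primesLE, mem_filter, mem_Ioc] at hp hp'
    omega
  rw [← prod_union hdisj]
  refine n.prod_pow_factorization_centralBinom.symm.trans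
    (prod_subset (fun p hp => ?_) fun p hp hp' => ?_).symm
  · simp only [mem_union, mem_primesLE, mem_filter, mem_Ioc, mem_range] at hp ⊢
    omega
  · by_cases hprime : p.Prime
    · simp only [mem_union, mem_primesLE, mem_filter, mem_Ioc, mem_range, hprime, and_true,
        not_or] at hp hp'
      rw [factorization_centralBinom_of_two_mul_self_lt_three_mul n_large (by omega) (by omega),
        pow_zero]
    · rw [factorization_eq_zero_of_not_prime _ hprime, pow_zero]

theorem centralBinom_le_pow_card_primes_Ioc {n : ℕ} (n_large : 2 < n) :
    centralBinom n ≤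
      (2 * n) ^ (sqrt (2 * n) + #{p ∈ Ioc n (2 * n) | p.Prime}) * 4 ^ (2 * n / 3) :=
  calc centralBinom n = (∏ p ∈ primesLE (2 * n / 3), p ^ (centralBinom n).factorization p) *
        ∏ p ∈ Ioc n (2 * n) with p.Prime, p ^ (centralBinom n).factorization p :=
        centralBinom_eq_prod_primesLE_mul_prod_primes_Ioc n_large
    _ ≤ (2 * n) ^ sqrt (2 * n) * primorial (2 * n / 3) *
          (2 * n) ^ #{p ∈ Ioc n (2 * n) | p.Prime} :=
        mul_le_mul' (prod_primesLE_pow_factorization_centralBinom_le (by omega) _)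
          (prod_le_pow_card _ _ _ fun _ _ => pow_factorization_choose_le (by omega))
    _ ≤ (2 * n) ^ sqrt (2 * n) * 4 ^ (2 * n / 3) *
          (2 * n) ^ #{p ∈ Ioc n (2 * n) | p.Prime} := by
        gcongr; exact primorial_le_four_pow _
    _ = _ := by ring

theorem exists_two_primes_lt_and_le_two_mul_eventually (n : ℕ) (n_large : 512 ≤ n) :
    ∃ a b, a.Prime ∧ b.Prime ∧ n < a ∧ a < b ∧ b ≤ 2 * n := by
  have hlower : 4 ^ n < n * centralBinom n := four_pow_lt_mul_centralBinom n (by omega)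
  contrapose! hlower
  have hcard : #{p ∈ Ioc n (2 * n) | p.Prime} ≤ 1 := by
    refine card_le_one.2 fun a ha b hb => ?_
    simp only [mem_filter, mem_Ioc] at ha hb
    rcases lt_trichotomy a b with hab | hab | hab
    · exact absurd hb.1.2 (hlower a b ha.2 hb.2 ha.1.1 hab).not_ge
    · exact hab
    · exact absurd ha.1.2 (hlower b a hb.2 ha.2 hb.1.1 hab).not_ge
  calc n * centralBinom n
      ≤ n * ((2 * n) ^ (sqrt (2 * n) + 1) * 4 ^ (2 * n / 3)) := by
        grw [centralBinom_le_pow_card_primes_Ioc (by omega), hcard]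
        omega
    _ ≤ 4 ^ n := by rw [← mul_assoc]; exact bertrand_main_inequality_succ_sqrt n_large

theorem exists_two_primes_lt_and_le_two_mul_succ {n : ℕ} (q : ℕ) {a b : ℕ}
    (hab : a.Prime ∧ b.Prime ∧ a < b ∧ b ≤ 2 * q)
    (H : n < q → ∃ a b, a.Prime ∧ b.Prime ∧ n < a ∧ a < b ∧ b ≤ 2 * n) (hn : n < a) :
    ∃ a b, a.Prime ∧ b.Prime ∧ n < a ∧ a < b ∧ b ≤ 2 * n := by
  by_cases h : b ≤ 2 * n
  · exact ⟨a, b, hab.1, hab.2.1, hn, hab.2.2.1, h⟩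
  · exact H (by omega)

theorem exists_two_primes_lt_and_le_two_mul {n : ℕ} (hn : 6 ≤ n) :
    ∃ a b, a.Prime ∧ b.Prime ∧ n < a ∧ a < b ∧ b ≤ 2 * n := by
  rcases le_or_gt 512 n with h | h
  · exact exists_two_primes_lt_and_le_two_mul_eventually n h
  replace h : n < 521 := by omega
  revert h
  refine exists_two_primes_lt_and_le_two_mul_succ (b := 523) 269 (by norm_num) ?_
  refine exists_two_primes_lt_and_le_two_mul_succ (b := 271) 137 (by norm_num) ?_
  refine exists_two_primes_lt_and_le_two_mul_succ (b := 139) 71 (by norm_num) ?_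
  refine exists_two_primes_lt_and_le_two_mul_succ (b := 73) 41 (by norm_num) ?_
  refine exists_two_primes_lt_and_le_two_mul_succ (b := 43) 29 (by norm_num) ?_
  refine exists_two_primes_lt_and_le_two_mul_succ (b := 31) 17 (by norm_num) ?_
  refine exists_two_primes_lt_and_le_two_mul_succ (b := 19) 11 (by norm_num) ?_
  refine exists_two_primes_lt_and_le_two_mul_succ (b := 13) 7 (by norm_num) ?_
  exact fun _ => ⟨7, 11, by norm_num, by norm_num, by omega, by norm_num, by omega⟩

theorem nth_succ_le_of_nth_lt {P : ℕ → Prop} {k a : ℕ} (ha : P a) (h : nth P k < a) :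
    nth P (k + 1) ≤ a :=
  not_lt.1 fun h' => (le_nth_of_lt_nth_succ h' ha).not_gt h

theorem nth_prime_add_two_le (k : ℕ) :
    nth Nat.Prime (k + 2) ≤ nth Nat.Prime (k + 1) + nth Nat.Prime k := by
  rcases lt_or_ge k 3 with hk | hk
  · interval_cases k <;> simp [nth_prime_zero_eq_two, nth_prime_one_eq_three,
      nth_prime_two_eq_five, nth_prime_three_eq_seven, nth_prime_four_eq_eleven]
  have h7 : 7 ≤ nth Nat.Prime k :=
    nth_prime_three_eq_seven ▸ nth_monotone infinite_setOfPred_prime hk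
  obtain ⟨a, b, ha, hb, hka, hab, hb2⟩ :=
    exists_two_primes_lt_and_le_two_mul (by omega : 6 ≤ nth Nat.Prime k)
  have h1 : nth Nat.Prime (k + 1) ≤ a := nth_succ_le_of_nth_lt ha hka
  have h2 : nth Nat.Prime (k + 2) ≤ b := nth_succ_le_of_nth_lt hb (h1.trans_lt hab)
  have h3 : nth Nat.Prime k < nth Nat.Prime (k + 1) :=
    (nth_lt_nth infinite_setOfPred_prime).2 k.lt_succ_self
  omega

end Nat

theorem prime_add_ge (n : ℕ) (hn : 1 ≤ n) : p (n + 2) ≤ p (n + 1) + p n := by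
  obtain ⟨k, rfl⟩ := Nat.exists_eq_add_of_le' hn
  simpa [p] using Nat.nth_prime_add_two_le k
end

section
/- Assume that for every m ≥ 10 one has p_{m+1} − p_m − 1 < p_m/5 (equivalently, 5·p_{m+1} < 6·p_m + 5). Then for every n > 9, regarding the primes as real numbers, p_{n+1}^2 + p_n^2 − p_{n+2}^2 > (229·p_n^2 − 2460·p_n − 2400)/5^4. -/
theorem sq_add_sq_sub_sq_gt_of_five_mul_le {a b c : ℝ} (ha : 0 ≤ a) (hb : 0 ≤ b) (hc : 0 ≤ c)
    (hab : 5 * b ≤ 6 * a + 4) (hbc : 5 * c ≤ 6 * b + 4) :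
    (229 * a ^ 2 - 2460 * a - 2400) / 5 ^ 4 < b ^ 2 + a ^ 2 - c ^ 2 := by
  have hb2 : 25 * b ^ 2 ≤ 36 * a ^ 2 + 48 * a + 16 := by nlinarith
  have hc2 : 25 * c ^ 2 ≤ 36 * b ^ 2 + 48 * b + 16 := by nlinarith
  rw [div_lt_iff₀ (by norm_num)]
  linarith

theorem five_mul_p_succ_le_of_nagura (hNagura : ∀ m : ℕ, 10 ≤ m → 5 * p (m + 1) < 6 * p m + 5)
    {m : ℕ} (hm : 10 ≤ m) : 5 * (p (m + 1) : ℝ) ≤ 6 * p m + 4 := by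
  exact_mod_cast Nat.le_of_lt_succ (hNagura m hm)

theorem nagura_sq_bound
    (hNagura : ∀ m : ℕ, 10 ≤ m → 5 * p (m + 1) < 6 * p m + 5) :
    ∀ n : ℕ, 9 < n →
      (p (n + 1) : ℝ) ^ 2 + (p n : ℝ) ^ 2 - (p (n + 2) : ℝ) ^ 2 >
        (229 * (p n : ℝ) ^ 2 - 2460 * (p n : ℝ) - 2400) / 5 ^ 4 := by
  intro n hn
  exact sq_add_sq_sub_sq_gt_of_five_mul_le (by positivity) (by positivity) (by positivity)
    (five_mul_p_succ_le_of_nagura hNagura (by omega))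
    (five_mul_p_succ_le_of_nagura hNagura (by omega))
end

section
/- Assume that for every m ≥ 10 one has 5·p_{m+1} < 6·p_m + 5. Then for every n > 9, p_{n+2}^2 < p_{n+1}^2 + p_n^2. -/
/- Squaring `5c ≤ 6b + 4` and `5b ≤ 6a + 4` leaves `229a² > 1968a + 1536`, true once `a ≥ 10`. -/
theorem Nat.sq_lt_sq_add_sq_of_five_mul_lt_six_mul_add_five {a b c : ℕ} (ha : 10 ≤ a)
    (hab : 5 * b < 6 * a + 5) (hbc : 5 * c < 6 * b + 5) : c ^ 2 < b ^ 2 + a ^ 2 := by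
  have hb : 5 * b ≤ 6 * a + 4 := by omega
  have hc : 5 * c ≤ 6 * b + 4 := by omega
  have : 25 * c ^ 2 < 25 * (b ^ 2 + a ^ 2) :=
    calc 25 * c ^ 2 = (5 * c) ^ 2 := by ring
      _ ≤ (6 * b + 4) ^ 2 := Nat.pow_le_pow_left hc 2
      _ < 25 * (b ^ 2 + a ^ 2) := by nlinarith [Nat.mul_le_mul hb hb]
  omega

theorem add_one_le_p (n : ℕ) : n + 1 ≤ p n := by
  have := Nat.add_two_le_nth_prime (n - 1)
  unfold p
  omega

theorem nagura_implies_sq_lt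
    (hNagura : ∀ m : ℕ, 10 ≤ m → 5 * p (m + 1) < 6 * p m + 5) :
    ∀ n : ℕ, 9 < n → p (n + 2) ^ 2 < p (n + 1) ^ 2 + p n ^ 2 := by
  intro n hn
  exact Nat.sq_lt_sq_add_sq_of_five_mul_lt_six_mul_add_five
    ((Nat.le_succ_of_le hn).trans (add_one_le_p n))
    (hNagura n (by omega)) (hNagura (n + 1) (by omega))
end

section
/- Assume that for every m ≥ 119 one has p_{m+1} − p_m − 1 < p_m/13 (equivalently, 13·p_{m+1} < 14·p_m + 13). Then for every n > 118, regarding the primes as real numbers, p_{n+1}^3 + p_n^3 − p_{n+2}^3 > (3325841·p_n^3 − 23658180·p_n^2 − 56847882·p_n − 38416742)/13^6. -/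
lemma Nat.cast_thirteen_mul_le_of_lt {x y : ℕ} (h : 13 * y < 14 * x + 13) :
    (13 : ℝ) * y ≤ 14 * x + 12 := by
  exact_mod_cast (by omega : 13 * y ≤ 14 * x + 12)

theorem thirteen_pow_six_mul_cube_combination_ge {a b c : ℝ} (hb : 0 ≤ b) (hc : 0 ≤ c)
    (hab : 13 * b ≤ 14 * a + 12) (hbc : 13 * c ≤ 14 * b + 12) :
    3325841 * a ^ 3 - 21838320 * a ^ 2 - 48438432 * a - 30215808 ≤
      13 ^ 6 * (b ^ 3 + a ^ 3 - c ^ 3) := by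
  have hc3 : 13 ^ 3 * c ^ 3 ≤ (14 * b + 12) ^ 3 := by rw [← mul_pow]; gcongr
  have hb0 : 0 ≤ 13 * b := by positivity
  calc 3325841 * a ^ 3 - 21838320 * a ^ 2 - 48438432 * a - 30215808
      = 13 ^ 6 * a ^ 3 - (547 * (14 * a + 12) ^ 3 + 7056 * 13 * (14 * a + 12) ^ 2
          + 6048 * 13 ^ 2 * (14 * a + 12) + 1728 * 13 ^ 3) := by ring
    _ ≤ 13 ^ 6 * a ^ 3 - (547 * (13 * b) ^ 3 + 7056 * 13 * (13 * b) ^ 2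
          + 6048 * 13 ^ 2 * (13 * b) + 1728 * 13 ^ 3) := by gcongr
    -- `(14 b + 12)³ - (13 b)³ = 547 b³ + 7056 b² + 6048 b + 1728`
    _ = 13 ^ 6 * (b ^ 3 + a ^ 3) - 13 ^ 3 * (14 * b + 12) ^ 3 := by ring
    _ ≤ 13 ^ 6 * (b ^ 3 + a ^ 3 - c ^ 3) := by linarith

theorem rohrbach_weis_cube_bound
    (hRW : ∀ m : ℕ, 119 ≤ m → 13 * p (m + 1) < 14 * p m + 13) :
    ∀ n : ℕ, 118 < n →
      (p (n + 1) : ℝ) ^ 3 + (p n : ℝ) ^ 3 - (p (n + 2) : ℝ) ^ 3 >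
        (3325841 * (p n : ℝ) ^ 3 - 23658180 * (p n : ℝ) ^ 2 - 56847882 * (p n : ℝ)
          - 38416742) / 13 ^ 6 := by
  intro n hn
  have hab := Nat.cast_thirteen_mul_le_of_lt (hRW n hn)
  have hbc := Nat.cast_thirteen_mul_le_of_lt (hRW (n + 1) (by omega))
  have key := thirteen_pow_six_mul_cube_combination_ge (Nat.cast_nonneg _) (Nat.cast_nonneg _)
    hab hbc
  have ha : (0 : ℝ) ≤ p n := Nat.cast_nonneg _
  rw [gt_iff_lt, div_lt_iff₀ (by norm_num)]
  linarith [sq_nonneg (p n : ℝ)]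
end

section
/- Assume that for every m ≥ 119 one has 13·p_{m+1} < 14·p_m + 13. Then for every n > 118, p_{n+2}^3 < p_{n+1}^3 + p_n^3. -/
theorem cube_lt_add_cube_of_lt_mul {a b c : ℕ} (ha : 11 ≤ a)
    (hab : 13 * b < 14 * a + 13) (hbc : 13 * c < 14 * b + 13) :
    c ^ 3 < b ^ 3 + a ^ 3 := by
  nlinarith [mul_le_mul hab.le hab.le (Nat.zero_le _) (Nat.zero_le _),
    mul_le_mul hbc.le hbc.le (Nat.zero_le _) (Nat.zero_le _)]

theorem p_mono : Monotone p :=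
  (Nat.nth_monotone Nat.infinite_setOfPred_prime).comp fun _ _ h => Nat.sub_le_sub_right h 1

theorem p_five : p 5 = 11 :=
  Nat.nth_prime_four_eq_eleven

theorem rohrbach_weis_implies_cube_lt
    (hRW : ∀ m : ℕ, 119 ≤ m → 13 * p (m + 1) < 14 * p m + 13) :
    ∀ n : ℕ, 118 < n → p (n + 2) ^ 3 < p (n + 1) ^ 3 + p n ^ 3 := by
  intro n hn
  have h_eleven_le : 11 ≤ p n := p_five ▸ p_mono (by omega : 5 ≤ n)
  exact cube_lt_add_cube_of_lt_mul h_eleven_le (hRW n hn) (hRW (n + 1) (by omega))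
end

section
/- For every n ≥ 1, there exists an integer m with p_{n+1} + 1 ≤ m ≤ p_{n+1} + p_n such that m has a prime divisor strictly greater than p_n. -/
/-!
The integer `m` can be taken to be a prime in `(p (n + 1), p (n + 1) + p n]`. When `p n ≥ 6` there
are two primes in `(p n, 2 * p n]`; both are at least `p (n + 1)`, so the larger one lies in that
interval. The two primes come from Erdős's proof of Bertrand's postulate: in `centralBinom x` the
primes up to `2x/3` contribute at most `(2x) ^ √(2x) * 4 ^ (2x/3)`, the primes in `(2x/3, x]`
nothing, and each prime in `(x, 2x]` itself; with at most one prime in `(x, 2x]` this contradicts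
`4 ^ x < x * centralBinom x` once `x ≥ 512`. Below 512 a chain of primes, each at most twice the
one two places before it, does the job, and `p n < 6` is checked by hand.
-/

open Real in
theorem real_main_inequality_two_primes {x : ℝ} (x_large : 512 ≤ x) :
    x * (2 * x) * (2 * x) ^ √(2 * x) * 4 ^ (2 * x / 3) ≤ 4 ^ x := by
  -- the logarithm of (left side) / (right side), as a function of `z = 2 * x`
  let f : ℝ → ℝ := fun z => 2 * log z + √z * log z - (log 2 / 3 * z + log 2)
  have hf : ConcaveOn ℝ (Set.Ioi 1) f := by
    have hlog := strictConcaveOn_log_Ioi.concaveOn.subset (Set.Ioi_subset_Ioi zero_le_one)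
      (convex_Ioi 1)
    have hlin : ConvexOn ℝ (Set.Ioi 1) fun z : ℝ => log 2 / 3 * z + log 2 :=
      ((convexOn_id (convex_Ioi 1)).smul (by positivity)).add_const _
    exact ((hlog.smul zero_le_two).add strictConcaveOn_sqrt_mul_log_Ioi.concaveOn).sub hlin
  have hlog2 : 0 < log 2 := log_pos one_lt_two
  have h36 : 0 ≤ f 36 := by
    have hs : √36 = 6 := (sqrt_eq_iff_mul_self_eq_of_pos (by norm_num)).2 (by norm_num)
    have hl : log 36 = 2 * log 2 + 2 * log 3 := by
      rw [show (36 : ℝ) = 2 ^ 2 * 3 ^ 2 by norm_num, log_mul (by positivity) (by positivity),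
        log_pow, log_pow]
      push_cast; ring
    have := log_nonneg (show (1 : ℝ) ≤ 3 by norm_num)
    simp only [f, hs, hl]
    linarith
  have h1024 : f 1024 ≤ 0 := by
    have hs : √1024 = 32 := (sqrt_eq_iff_mul_self_eq_of_pos (by norm_num)).2 (by norm_num)
    have hl : log 1024 = 10 * log 2 := by
      rw [show (1024 : ℝ) = 2 ^ 10 by norm_num, log_pow]; push_cast; ring
    simp only [f, hs, hl]
    linarith
  -- a concave function that drops from `f 36 ≥ 0` to `f 1024 ≤ 0` stays `≤ 0` beyond 1024
  have hfx : f (2 * x) ≤ 0 :=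
    (hf.right_le_of_le_left'' (by norm_num) (by simp only [Set.mem_Ioi]; linarith)
      (by norm_num) (by linarith) (h1024.trans h36)).trans h1024
  have hx : 0 < x := by linarith
  have h4 : log 4 = 2 * log 2 := by
    rw [show (4 : ℝ) = 2 ^ 2 by norm_num, log_pow]; push_cast; ring
  rw [← log_le_log_iff (by positivity) (by positivity), log_mul (by positivity) (by positivity),
    log_mul (by positivity) (by positivity), log_mul (by positivity) (by positivity),
    log_rpow (by positivity), log_rpow (by positivity), log_rpow (by positivity), h4,
    log_mul (by positivity) (by positivity)]
  simp only [f] at hfx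
  rw [log_mul (by positivity) (by positivity)] at hfx
  linarith

open Nat Finset

theorem main_inequality_two_primes {n : ℕ} (n_large : 512 ≤ n) :
    n * (2 * n) * (2 * n) ^ sqrt (2 * n) * 4 ^ (2 * n / 3) ≤ 4 ^ n := by
  rw [← @cast_le ℝ]
  simp only [cast_mul, cast_pow, ← Real.rpow_natCast, cast_ofNat]
  refine le_trans ?_ (real_main_inequality_two_primes (by exact_mod_cast n_large))
  gcongr
  · exact_mod_cast (by omega : 1 ≤ 2 * n)
  · exact_mod_cast Real.nat_sqrt_le_real_sqrt
  · norm_num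
  · exact cast_div_le.trans (by norm_cast)

theorem pow_factorization_centralBinom_le {n q : ℕ} (hn : 2 < n) :
    q ^ (centralBinom n).factorization q ≤
      (if q.Prime ∧ q ≤ sqrt (2 * n) then 2 * n else 1) *
      (if q.Prime ∧ q ≤ 2 * n / 3 then q else 1) * (if q.Prime ∧ n < q then q else 1) := by
  by_cases hq : q.Prime
  swap
  · simp [factorization_eq_zero_of_not_prime _ hq, hq]
  simp only [hq, true_and]
  have hA : 0 < if q ≤ sqrt (2 * n) then 2 * n else 1 := by split_ifs <;> omega
  have hB : 0 < if q ≤ 2 * n / 3 then q else 1 := by split_ifs <;> simp [hq.pos]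
  have hC : 0 < if n < q then q else 1 := by split_ifs <;> simp [hq.pos]
  rcases le_or_gt q (sqrt (2 * n)) with hs | hs
  · rw [if_pos hs]
    exact (pow_factorization_choose_le (by omega)).trans
      ((Nat.le_mul_of_pos_right _ hB).trans (Nat.le_mul_of_pos_right _ hC))
  have hv : q ^ (centralBinom n).factorization q ≤ q :=
    (pow_le_pow_right₀ hq.one_le (factorization_choose_le_one (sqrt_lt'.1 hs))).trans_eq
      (pow_one q)
  rcases le_or_gt q (2 * n / 3) with hsmall | hsmall
  · rw [if_pos hsmall]
    exact hv.trans ((Nat.le_mul_of_pos_left _ hA).trans (Nat.le_mul_of_pos_right _ hC))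
  rcases le_or_gt q n with hmid | hlarge
  · simp [factorization_centralBinom_of_two_mul_self_lt_three_mul hn hmid (by omega),
      hs.not_ge, hsmall.not_ge, hmid.not_gt]
  · rw [if_pos hlarge]
    exact hv.trans (Nat.le_mul_of_pos_left _ (Nat.mul_pos hA hB))

def bertrandPrimes (n : ℕ) : Finset ℕ := {q ∈ Ioc n (2 * n) | q.Prime}

theorem centralBinom_le_mul_prod_bertrandPrimes {n : ℕ} (hn : 2 < n) :
    centralBinom n ≤ (2 * n) ^ sqrt (2 * n) * 4 ^ (2 * n / 3) * ∏ q ∈ bertrandPrimes n, q := by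
  have hsmall : ∏ q ∈ range (2 * n + 1), (if q.Prime ∧ q ≤ sqrt (2 * n) then 2 * n else 1) ≤
      (2 * n) ^ sqrt (2 * n) := by
    rw [← prod_filter, prod_const]
    refine pow_le_pow_right₀ (by omega) ((card_le_card fun q hq => ?_).trans (card_Icc 1 _).le)
    simp only [mem_filter, mem_Icc] at hq ⊢
    exact ⟨hq.2.1.one_le, hq.2.2⟩
  have hmiddle : ∏ q ∈ range (2 * n + 1), (if q.Prime ∧ q ≤ 2 * n / 3 then q else 1) =
      primorial (2 * n / 3) := by
    rw [← prod_filter, primorial]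
    congr 1
    ext q
    simp only [mem_filter, mem_range]
    grind
  have hlarge : ∏ q ∈ range (2 * n + 1), (if q.Prime ∧ n < q then q else 1) =
      ∏ q ∈ bertrandPrimes n, q := by
    rw [← prod_filter, bertrandPrimes]
    congr 1
    ext q
    simp only [mem_filter, mem_range, mem_Ioc]
    grind
  calc centralBinom n = ∏ q ∈ range (2 * n + 1), q ^ (centralBinom n).factorization q :=
        (prod_pow_factorization_centralBinom n).symm
    _ ≤ _ := prod_le_prod' fun q _ => pow_factorization_centralBinom_le hn
    _ ≤ _ := by
      rw [prod_mul_distrib, prod_mul_distrib, hmiddle, hlarge]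
      gcongr
      exact primorial_le_four_pow _

theorem one_lt_card_bertrandPrimes_eventually {n : ℕ} (n_large : 512 ≤ n) :
    1 < #(bertrandPrimes n) := by
  by_contra! h
  have hprod : ∏ q ∈ bertrandPrimes n, q ≤ 2 * n :=
    calc ∏ q ∈ bertrandPrimes n, q ≤ (2 * n) ^ #(bertrandPrimes n) :=
          prod_le_pow_card _ _ _ fun q hq => (mem_Ioc.1 (mem_filter.1 hq).1).2
      _ ≤ 2 * n := (pow_le_pow_right₀ (by omega) h).trans_eq (pow_one _)
  have := calc 4 ^ n < n * centralBinom n := four_pow_lt_mul_centralBinom n (by omega)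
    _ ≤ n * ((2 * n) ^ sqrt (2 * n) * 4 ^ (2 * n / 3) * (2 * n)) := by
      grw [centralBinom_le_mul_prod_bertrandPrimes (by omega), hprod]
    _ = n * (2 * n) * (2 * n) ^ sqrt (2 * n) * 4 ^ (2 * n / 3) := by ring
    _ ≤ 4 ^ n := main_inequality_two_primes n_large
  exact this.false

theorem one_lt_card_bertrandPrimes_succ {n : ℕ} (a b c : ℕ)
    (habc : b.Prime ∧ c.Prime ∧ a < b ∧ b < c ∧ c ≤ 2 * a)
    (H : n < a → 1 < #(bertrandPrimes n)) (hnb : n < b) : 1 < #(bertrandPrimes n) := by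
  obtain ⟨hb, hc, hab, hbc, hca⟩ := habc
  by_cases hcn : c ≤ 2 * n
  · refine one_lt_card.2 ⟨b, ?_, c, ?_, hbc.ne⟩ <;>
      simp only [bertrandPrimes, mem_filter, mem_Ioc]
    exacts [⟨⟨hnb, by omega⟩, hb⟩, ⟨⟨by omega, hcn⟩, hc⟩]
  · exact H (by omega)

theorem one_lt_card_bertrandPrimes {n : ℕ} (hn : 6 ≤ n) : 1 < #(bertrandPrimes n) := by
  rcases le_or_gt 512 n with h | h
  · exact one_lt_card_bertrandPrimes_eventually h
  refine one_lt_card_bertrandPrimes_succ 317 547 631 (by norm_num) ?_ (by omega)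
  refine one_lt_card_bertrandPrimes_succ 277 317 547 (by norm_num) ?_
  refine one_lt_card_bertrandPrimes_succ 163 277 317 (by norm_num) ?_
  refine one_lt_card_bertrandPrimes_succ 139 163 277 (by norm_num) ?_
  refine one_lt_card_bertrandPrimes_succ 83 139 163 (by norm_num) ?_
  refine one_lt_card_bertrandPrimes_succ 73 83 139 (by norm_num) ?_
  refine one_lt_card_bertrandPrimes_succ 43 73 83 (by norm_num) ?_
  refine one_lt_card_bertrandPrimes_succ 37 43 73 (by norm_num) ?_
  refine one_lt_card_bertrandPrimes_succ 23 37 43 (by norm_num) ?_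
  refine one_lt_card_bertrandPrimes_succ 19 23 37 (by norm_num) ?_
  refine one_lt_card_bertrandPrimes_succ 13 19 23 (by norm_num) ?_
  refine one_lt_card_bertrandPrimes_succ 11 13 19 (by norm_num) ?_
  refine one_lt_card_bertrandPrimes_succ 7 11 13 (by norm_num) ?_
  exact one_lt_card_bertrandPrimes_succ 6 7 11 (by norm_num) fun h => absurd h (by omega)

theorem exists_prime_lt_and_le_add {x r : ℕ} (hx : 0 < x) (hr : r.Prime) (hxr : x < r)
    (hgap : ∀ q, q.Prime → q < r → q ≤ x) : ∃ q, q.Prime ∧ r < q ∧ q ≤ r + x := by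
  rcases le_or_gt 6 x with hx6 | hx6
  · obtain ⟨q, hq, hqr⟩ := exists_mem_ne (one_lt_card_bertrandPrimes hx6) r
    simp only [bertrandPrimes, mem_filter, mem_Ioc] at hq
    have hrq : r ≤ q := not_lt.1 fun h => by have := hgap q hq.2 h; omega
    exact ⟨q, hq.2, by omega, by omega⟩
  have hr7 : r ≤ 7 := not_lt.1 fun h => by have := hgap 7 (by norm_num) h; omega
  have hr2 := hr.two_le
  interval_cases r
  · exact ⟨3, by norm_num, by omega, by omega⟩
  · have := hgap 2 (by norm_num) (by omega)
    exact ⟨5, by norm_num, by omega, by omega⟩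
  · norm_num at hr
  · have := hgap 3 (by norm_num) (by omega)
    exact ⟨7, by norm_num, by omega, by omega⟩
  · norm_num at hr
  · have := hgap 5 (by norm_num) (by omega)
    exact ⟨11, by norm_num, by omega, by omega⟩

theorem sylvester_schur_step (n : ℕ) (hn : 1 ≤ n) :
    ∃ m : ℕ, p (n + 1) + 1 ≤ m ∧ m ≤ p (n + 1) + p n ∧
      ∃ q : ℕ, q.Prime ∧ q ∣ m ∧ p n < q := by
  obtain ⟨k, rfl⟩ : ∃ k, n = k + 1 := ⟨n - 1, by omega⟩
  have hlt : nth Nat.Prime k < nth Nat.Prime (k + 1) :=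
    nth_strictMono infinite_setOfPred_prime k.lt_succ_self
  obtain ⟨q, hq, hrq, hqr⟩ := exists_prime_lt_and_le_add (prime_nth_prime k).pos
    (prime_nth_prime (k + 1)) hlt fun q hq h => le_nth_of_lt_nth_succ h hq
  simp only [p, Nat.add_sub_cancel]
  exact ⟨q, hrq, hqr, q, hq, dvd_rfl, by omega⟩
end
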